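/- Let n ≥ 1 and let A = (σ_{ij}) be an n×n matrix with 0 < σmin ≤ σ_{ij} ≤ σmax for all i, j; set V = (1/n)·A⊙A, so that ρ(V) > 0. For each s ∈ (0, √ρ(V)) let (q(s), q̃(s)) be the unique nonzero nonnegative solution of the Master Equations for V at parameter s. Then the componentwise limits q(0) := lim_{s↓0} q(s) and q̃(0) := lim_{s↓0} q̃(s) exist, and they satisfy q_i(0)·(V q̃(0))_i = 1 and q̃_i(0)·(Vᵀ q(0))_i = 1 for every i ∈ {1,…,n}. -/

import Mathlib

open Matrix BigOperators Filter

/-- The spectral radius of a real square matrix: the maximum modulus of its complex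
eigenvalues (the roots of its characteristic polynomial over `ℂ`). -/
noncomputable def specRad {n : ℕ} (V : Matrix (Fin n) (Fin n) ℝ) : ℝ :=
  sSup {x : ℝ | ∃ μ : ℂ, (V.map (Complex.ofReal)).charpoly.IsRoot μ ∧ x = ‖μ‖}

/-- The Master Equations at parameter `s` for a nonnegative matrix `V`. -/
def MasterEqs {n : ℕ} (V : Matrix (Fin n) (Fin n) ℝ) (s : ℝ) (q qt : Fin n → ℝ) : Prop :=
  (∀ i, 0 ≤ q i) ∧ (∀ i, 0 ≤ qt i) ∧
  (∀ i, q i = Vᵀ.mulVec q i / (s ^ 2 + V.mulVec qt i * Vᵀ.mulVec q i)) ∧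
  (∀ i, qt i = V.mulVec qt i / (s ^ 2 + V.mulVec qt i * Vᵀ.mulVec q i)) ∧
  (∑ i, q i = ∑ i, qt i)

/-! A nonzero solution has `S := ∑ q_i = ∑ q̃_i > 0`, and summing `q_i (s² + (Vq̃)_i (Vᵀq)_i) =
(Vᵀq)_i` over `i` against the entry bounds `c₁ ≤ V_ij ≤ c₂` gives `n c₁ ≤ s² + c₂² S²`. So for
small `s` the sum `S`, and with it `(Vq̃)_i` and `(Vᵀq)_i`, is bounded below by a constant `κ > 0`.
Consequently the solutions stay in a compact box and
`1 - q_i (Vq̃)_i = s² / (s² + (Vq̃)_i (Vᵀq)_i) ≤ s² / κ²`, so every cluster point as `s ↓ 0`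
solves `q_i (Vq̃)_i = q̃_i (Vᵀq)_i = 1`, `∑ q = ∑ q̃`. Comparing two solutions of this system at
an index maximising `q'_i / q_i` and using `V > 0` shows they coincide, hence the solutions
converge. Finally `ρ(V) > 0` because `tr V > 0`, so the solutions exist for all small `s > 0`. -/

open Topology

lemma specRad_pos_of_trace_pos {n : ℕ} {V : Matrix (Fin n) (Fin n) ℝ} (h : 0 < V.trace) :
    0 < specRad V := by
  set p := (V.map Complex.ofReal).charpoly
  have hp : p ≠ 0 := (charpoly_monic _).ne_zero
  obtain ⟨μ, hμ, hμ0⟩ : ∃ μ ∈ p.roots, μ ≠ 0 := by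
    by_contra! hroots
    have : ((V.trace : ℝ) : ℂ) = p.roots.sum := by
      rw [← trace_eq_sum_roots_charpoly]
      simp [Matrix.trace]
    rw [Multiset.sum_eq_zero hroots] at this
    exact h.ne' (by exact_mod_cast this)
  have hbdd : BddAbove {x : ℝ | ∃ μ : ℂ, p.IsRoot μ ∧ x = ‖μ‖} := by
    refine ((Polynomial.finite_setOfPred_isRoot hp).image (‖·‖)).bddAbove.mono ?_
    rintro _ ⟨μ, hμ, rfl⟩
    exact ⟨μ, hμ, rfl⟩
  exact (norm_pos_iff.mpr hμ0).trans_le <|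
    le_csSup hbdd ⟨μ, (Polynomial.mem_roots hp).1 hμ, rfl⟩

section NonnegMatrix

variable {m ι : Type*} [Fintype ι] {M : Matrix m ι ℝ} {c : ℝ} {x y : ι → ℝ}

lemma mul_sum_le_mulVec (hM : ∀ i j, c ≤ M i j) (hx : 0 ≤ x) (i : m) :
    c * ∑ j, x j ≤ (M *ᵥ x) i := by
  rw [Finset.mul_sum]
  exact Finset.sum_le_sum fun j _ => mul_le_mul_of_nonneg_right (hM i j) (hx j)

lemma mulVec_le_mul_sum (hM : ∀ i j, M i j ≤ c) (hx : 0 ≤ x) (i : m) :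
    (M *ᵥ x) i ≤ c * ∑ j, x j := by
  rw [Finset.mul_sum]
  exact Finset.sum_le_sum fun j _ => mul_le_mul_of_nonneg_right (hM i j) (hx j)

lemma mulVec_apply_mono (hM : ∀ i j, 0 ≤ M i j) (hxy : x ≤ y) (i : m) :
    (M *ᵥ x) i ≤ (M *ᵥ y) i :=
  Finset.sum_le_sum fun j _ => mul_le_mul_of_nonneg_left (hxy j) (hM i j)

lemma eq_of_le_of_mulVec_apply_eq {i : m} (hM : ∀ j, 0 < M i j) (hxy : x ≤ y)
    (h : (M *ᵥ x) i = (M *ᵥ y) i) : x = y := by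
  have hle : ∀ j ∈ Finset.univ, M i j * x j ≤ M i j * y j := fun j _ =>
    mul_le_mul_of_nonneg_left (hxy j) (hM j).le
  funext j
  exact mul_left_cancel₀ (hM j).ne' ((Finset.sum_eq_sum_iff_of_le hle).1 h j (Finset.mem_univ j))

end NonnegMatrix

namespace MasterEqs

variable {n : ℕ} {V : Matrix (Fin n) (Fin n) ℝ} {s c₁ c₂ m : ℝ} {q qt : Fin n → ℝ}

lemma symm (h : MasterEqs V s q qt) : MasterEqs Vᵀ s qt q := by
  obtain ⟨hq, hqt, heq, heqt, hsum⟩ := h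
  refine ⟨hqt, hq, fun i => ?_, fun i => ?_, hsum.symm⟩ <;>
    rw [transpose_transpose, mul_comm ((Vᵀ *ᵥ q) i)]
  exacts [heqt i, heq i]

lemma sum_pos (h : MasterEqs V s q qt) (hne : ¬(q = 0 ∧ qt = 0)) : 0 < ∑ i, q i := by
  refine (Finset.sum_nonneg fun i _ => h.1 i).lt_of_ne fun hS => hne ⟨?_, ?_⟩ <;> funext i
  · exact (Finset.sum_eq_zero_iff_of_nonneg fun i _ => h.1 i).1 hS.symm i (Finset.mem_univ i)
  · exact (Finset.sum_eq_zero_iff_of_nonneg fun i _ => h.2.1 i).1 (h.2.2.2.2 ▸ hS.symm) i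
      (Finset.mem_univ i)

lemma one_sub_mul_mulVec (h : MasterEqs V s q qt) {i : Fin n} (hX : 0 < (V *ᵥ qt) i)
    (hY : 0 < (Vᵀ *ᵥ q) i) :
    1 - q i * (V *ᵥ qt) i = s ^ 2 / (s ^ 2 + (V *ᵥ qt) i * (Vᵀ *ᵥ q) i) := by
  have hD : s ^ 2 + (V *ᵥ qt) i * (Vᵀ *ᵥ q) i ≠ 0 := by positivity
  rw [h.2.2.1 i]
  field_simp
  ring

lemma mulVec_pos (h : MasterEqs V s q qt) (hc₁ : 0 < c₁) (hlo : ∀ i j, c₁ ≤ V i j)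
    (hS : 0 < ∑ i, q i) (i : Fin n) : 0 < (V *ᵥ qt) i :=
  (mul_pos hc₁ hS).trans_le (h.2.2.2.2 ▸ mul_sum_le_mulVec hlo h.2.1 i)

lemma natCast_mul_le_sq_add (h : MasterEqs V s q qt) (hc₁ : 0 < c₁) (hlo : ∀ i j, c₁ ≤ V i j)
    (hhi : ∀ i j, V i j ≤ c₂) (hS : 0 < ∑ i, q i) :
    n * c₁ ≤ s ^ 2 + c₂ ^ 2 * (∑ i, q i) ^ 2 := by
  set S := ∑ i, q i
  have hX : ∀ i, 0 < (V *ᵥ qt) i := h.mulVec_pos hc₁ hlo hS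
  have hY : ∀ i, 0 < (Vᵀ *ᵥ q) i := h.symm.mulVec_pos hc₁ (fun i j => hlo j i) (h.2.2.2.2 ▸ hS)
  have hD : ∀ i, (V *ᵥ qt) i * (Vᵀ *ᵥ q) i ≤ c₂ ^ 2 * S ^ 2 := fun i => by
    have hXle : (V *ᵥ qt) i ≤ c₂ * S :=
      (mulVec_le_mul_sum hhi h.2.1 i).trans_eq (congr_arg (c₂ * ·) h.2.2.2.2.symm)
    have hYle : (Vᵀ *ᵥ q) i ≤ c₂ * S := mulVec_le_mul_sum (fun i j => hhi j i) h.1 i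
    nlinarith [mul_le_mul hXle hYle (hY i).le ((hX i).le.trans hXle), hX i]
  refine le_of_mul_le_mul_left ?_ hS
  calc S * (n * c₁) = ∑ _i : Fin n, c₁ * S := by simp; ring
    _ ≤ ∑ i, (Vᵀ *ᵥ q) i :=
        Finset.sum_le_sum fun i _ => mul_sum_le_mulVec (fun i j => hlo j i) h.1 i
    _ = ∑ i, q i * (s ^ 2 + (V *ᵥ qt) i * (Vᵀ *ᵥ q) i) := by
        refine Finset.sum_congr rfl fun i _ => ?_
        rw [h.2.2.1 i, div_mul_cancel₀ _ (by nlinarith [hX i, hY i])]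
    _ ≤ ∑ i, q i * (s ^ 2 + c₂ ^ 2 * S ^ 2) :=
        Finset.sum_le_sum fun i _ => mul_le_mul_of_nonneg_left (by linarith [hD i]) (h.1 i)
    _ = S * (s ^ 2 + c₂ ^ 2 * S ^ 2) := by rw [← Finset.sum_mul]

lemma mul_le_mulVec (h : MasterEqs V s q qt) (hc₁ : 0 < c₁) (hlo : ∀ i j, c₁ ≤ V i j)
    (hhi : ∀ i j, V i j ≤ c₂) (hS : 0 < ∑ i, q i) (hm : 0 ≤ m)
    (hsm : s ^ 2 + c₂ ^ 2 * m ^ 2 ≤ n * c₁) (i : Fin n) : c₁ * m ≤ (V *ᵥ qt) i := by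
  have hc₂ : 0 < c₂ := hc₁.trans_le ((hlo i i).trans (hhi i i))
  have hmS : m ≤ ∑ i, q i := by
    have := h.natCast_mul_le_sq_add hc₁ hlo hhi hS
    have hsq : m ^ 2 ≤ (∑ i, q i) ^ 2 :=
      le_of_mul_le_mul_left (by linarith) (pow_pos hc₂ 2)
    exact (pow_le_pow_iff_left₀ hm hS.le two_ne_zero).1 hsq
  calc c₁ * m ≤ c₁ * ∑ i, q i := mul_le_mul_of_nonneg_left hmS hc₁.le
    _ = c₁ * ∑ i, qt i := by rw [h.2.2.2.2]
    _ ≤ (V *ᵥ qt) i := mul_sum_le_mulVec hlo h.2.1 i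

lemma mul_mulVec_mem_Icc (h : MasterEqs V s q qt) (hc₁ : 0 < c₁) (hlo : ∀ i j, c₁ ≤ V i j)
    (hhi : ∀ i j, V i j ≤ c₂) (hS : 0 < ∑ i, q i) (hm : 0 < m)
    (hsm : s ^ 2 + c₂ ^ 2 * m ^ 2 ≤ n * c₁) (i : Fin n) :
    q i * (V *ᵥ qt) i ∈ Set.Icc (1 - s ^ 2 / (c₁ * m) ^ 2) 1 := by
  have hκ : 0 < c₁ * m := mul_pos hc₁ hm
  have hX := h.mul_le_mulVec hc₁ hlo hhi hS hm.le hsm i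
  have hY := h.symm.mul_le_mulVec hc₁ (fun i j => hlo j i) (fun i j => hhi j i)
    (h.2.2.2.2 ▸ hS) hm.le hsm i
  have hgap := h.one_sub_mul_mulVec (hκ.trans_le hX) (hκ.trans_le hY)
  have hD : (c₁ * m) ^ 2 ≤ s ^ 2 + (V *ᵥ qt) i * (Vᵀ *ᵥ q) i := by
    nlinarith [mul_le_mul hX hY hκ.le (hκ.le.trans hX), sq_nonneg s]
  constructor
  · have := div_le_div_of_nonneg_left (sq_nonneg s) (by positivity) hD
    linarith
  · have : 0 ≤ s ^ 2 / (s ^ 2 + (V *ᵥ qt) i * (Vᵀ *ᵥ q) i) :=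
      div_nonneg (sq_nonneg s) ((sq_nonneg _).trans hD)
    linarith

lemma le_inv (h : MasterEqs V s q qt) (hc₁ : 0 < c₁) (hlo : ∀ i j, c₁ ≤ V i j)
    (hhi : ∀ i j, V i j ≤ c₂) (hS : 0 < ∑ i, q i) (hm : 0 < m)
    (hsm : s ^ 2 + c₂ ^ 2 * m ^ 2 ≤ n * c₁) (i : Fin n) : q i ≤ (c₁ * m)⁻¹ := by
  rw [← one_div, le_div_iff₀ (mul_pos hc₁ hm)]
  exact (mul_le_mul_of_nonneg_left (h.mul_le_mulVec hc₁ hlo hhi hS hm.le hsm i) (h.1 i)).trans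
    (h.mul_mulVec_mem_Icc hc₁ hlo hhi hS hm hsm i).2

end MasterEqs

lemma eventually_masterEqs_bounds {n : ℕ} {V : Matrix (Fin n) (Fin n) ℝ} {c₁ c₂ m : ℝ}
    {q qt : ℝ → Fin n → ℝ} (hc₁ : 0 < c₁) (hlo : ∀ i j, c₁ ≤ V i j) (hhi : ∀ i j, V i j ≤ c₂)
    (hm : 0 < m) (hm' : c₂ ^ 2 * m ^ 2 < n * c₁)
    (hQ : ∀ᶠ s in 𝓝[>] 0, MasterEqs V s (q s) (qt s) ∧ 0 < ∑ i, q s i) :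
    ∀ᶠ s in 𝓝[>] 0, ∀ i, q s i ≤ (c₁ * m)⁻¹ ∧
      q s i * (V *ᵥ qt s) i ∈ Set.Icc (1 - s ^ 2 / (c₁ * m) ^ 2) 1 := by
  have hsmall : ∀ᶠ s in 𝓝[>] (0 : ℝ), s ^ 2 + c₂ ^ 2 * m ^ 2 ≤ n * c₁ :=
    nhdsWithin_le_nhds <| (((continuous_pow 2).add continuous_const).tendsto' 0 _
      (by simp)).eventually (ge_mem_nhds hm')
  filter_upwards [hQ, hsmall] with s ⟨h, hS⟩ hs i
  exact ⟨h.le_inv hc₁ hlo hhi hS hm hs i, h.mul_mulVec_mem_Icc hc₁ hlo hhi hS hm hs i⟩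

/-- The Master Equations at `s = 0`, with the denominators cleared. -/
structure LimitEqs {n : ℕ} (V : Matrix (Fin n) (Fin n) ℝ) (q qt : Fin n → ℝ) : Prop where
  nonneg_left : 0 ≤ q
  nonneg_right : 0 ≤ qt
  mul_mulVec : ∀ i, q i * (V *ᵥ qt) i = 1
  mul_transpose_mulVec : ∀ i, qt i * (Vᵀ *ᵥ q) i = 1
  sum_eq : ∑ i, q i = ∑ i, qt i

namespace LimitEqs

variable {n : ℕ} {V : Matrix (Fin n) (Fin n) ℝ} {q qt q' qt' : Fin n → ℝ}

lemma pos_left (h : LimitEqs V q qt) (i : Fin n) : 0 < q i :=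
  (h.nonneg_left i).lt_of_ne fun h0 => by simpa [← h0] using h.mul_mulVec i

lemma pos_right (h : LimitEqs V q qt) (i : Fin n) : 0 < qt i :=
  (h.nonneg_right i).lt_of_ne fun h0 => by simpa [← h0] using h.mul_transpose_mulVec i

lemma mulVec_eq_inv (h : LimitEqs V q qt) (i : Fin n) : (V *ᵥ qt) i = (q i)⁻¹ :=
  eq_inv_of_mul_eq_one_right (h.mul_mulVec i)

lemma transpose_mulVec_eq_inv (h : LimitEqs V q qt) (i : Fin n) : (Vᵀ *ᵥ q) i = (qt i)⁻¹ :=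
  eq_inv_of_mul_eq_one_right (h.mul_transpose_mulVec i)

lemma eq_smul_of_le_smul (hV : ∀ i j, 0 < V i j) (h : LimitEqs V q qt)
    (h' : LimitEqs V q' qt') {t : ℝ} (hle : q' ≤ t • q) {i₀ : Fin n}
    (hi₀ : q' i₀ = t * q i₀) : q' = t • q ∧ qt' = t⁻¹ • qt := by
  have hqt : t⁻¹ • qt ≤ qt' := fun j => by
    have hY : (Vᵀ *ᵥ q') j ≤ t * (Vᵀ *ᵥ q) j := by
      simpa only [mulVec_smul, Pi.smul_apply, smul_eq_mul] using
        mulVec_apply_mono (M := Vᵀ) (fun i j => (hV j i).le) hle j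
    have hY' : 0 < (Vᵀ *ᵥ q') j := by
      rw [h'.transpose_mulVec_eq_inv]
      exact inv_pos.2 (h'.pos_right j)
    calc (t⁻¹ • qt) j = (t * (Vᵀ *ᵥ q) j)⁻¹ := by
          rw [Pi.smul_apply, smul_eq_mul, mul_inv, h.transpose_mulVec_eq_inv, inv_inv]
      _ ≤ ((Vᵀ *ᵥ q') j)⁻¹ := inv_anti₀ hY' hY
      _ = qt' j := by rw [h'.transpose_mulVec_eq_inv, inv_inv]
  have hqt' : t⁻¹ • qt = qt' := eq_of_le_of_mulVec_apply_eq (hV i₀) hqt <| by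
    rw [mulVec_smul, Pi.smul_apply, h.mulVec_eq_inv, h'.mulVec_eq_inv, hi₀, mul_inv,
      smul_eq_mul]
  refine ⟨eq_of_le_of_mulVec_apply_eq (M := Vᵀ) (fun j => hV j i₀) hle ?_, hqt'.symm⟩
  rw [mulVec_smul, Pi.smul_apply, h.transpose_mulVec_eq_inv, h'.transpose_mulVec_eq_inv,
    ← hqt', Pi.smul_apply, smul_eq_mul, smul_eq_mul, mul_inv, inv_inv]

lemma unique (hV : ∀ i j, 0 < V i j) (h : LimitEqs V q qt) (h' : LimitEqs V q' qt') :
    q' = q ∧ qt' = qt := by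
  rcases isEmpty_or_nonempty (Fin n) with hn | hn
  · exact ⟨Subsingleton.elim _ _, Subsingleton.elim _ _⟩
  obtain ⟨i₀, hi₀⟩ := Finite.exists_max fun i => q' i / q i
  set t := q' i₀ / q i₀
  obtain ⟨hq', hqt'⟩ := eq_smul_of_le_smul hV h h' (t := t)
    (fun i => (div_le_iff₀ (h.pos_left i)).1 (hi₀ i)) (div_mul_cancel₀ _ (h.pos_left i₀).ne').symm
  have ht : 0 < t := div_pos (h'.pos_left i₀) (h.pos_left i₀)
  have hS : 0 < ∑ i, q i := Finset.sum_pos (fun i _ => h.pos_left i) Finset.univ_nonempty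
  have ht1 : t = 1 := by
    have hsum : t * ∑ i, q i = t⁻¹ * ∑ i, q i := by
      simpa [hq', hqt', ← Finset.mul_sum, h.sum_eq] using h'.sum_eq
    have := mul_right_cancel₀ hS.ne' hsum
    field_simp at this
    nlinarith
  rw [hq', hqt', ht1, one_smul, inv_one, one_smul]
  exact ⟨rfl, rfl⟩

end LimitEqs

lemma MapClusterPt.eq_of_tendsto {α X : Type*} [TopologicalSpace X] [T2Space X]
    {F : Filter α} {u : α → X} {x y : X} (h : MapClusterPt x F u) (hu : Tendsto u F (𝓝 y)) :
    x = y :=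
  eq_of_nhds_neBot (h.neBot.mono (inf_le_inf_left _ hu))

lemma LimitEqs.of_mapClusterPt {n : ℕ} {V : Matrix (Fin n) (Fin n) ℝ}
    {Q : ℝ → (Fin n → ℝ) × (Fin n → ℝ)} {κ : ℝ} {p : (Fin n → ℝ) × (Fin n → ℝ)}
    (hQ : ∀ᶠ s in 𝓝[>] 0, MasterEqs V s (Q s).1 (Q s).2)
    (h₁ : ∀ᶠ s in 𝓝[>] 0, ∀ i, (Q s).1 i * (V *ᵥ (Q s).2) i ∈ Set.Icc (1 - s ^ 2 / κ ^ 2) 1)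
    (h₂ : ∀ᶠ s in 𝓝[>] 0, ∀ i, (Q s).2 i * (Vᵀ *ᵥ (Q s).1) i ∈ Set.Icc (1 - s ^ 2 / κ ^ 2) 1)
    (hp : MapClusterPt p (𝓝[>] 0) Q) : LimitEqs V p.1 p.2 := by
  have hclosed {S : Set ((Fin n → ℝ) × (Fin n → ℝ))} (hS : IsClosed S)
      (hQS : ∀ᶠ s in 𝓝[>] 0, Q s ∈ S) : p ∈ S :=
    hS.mem_of_mapClusterPt hp hQS
  have hone {g : (Fin n → ℝ) × (Fin n → ℝ) → ℝ} (hg : Continuous g)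
      (hgQ : ∀ᶠ s in 𝓝[>] 0, g (Q s) ∈ Set.Icc (1 - s ^ 2 / κ ^ 2) 1) : g p = 1 := by
    have hlow : Tendsto (fun s : ℝ => 1 - s ^ 2 / κ ^ 2) (𝓝[>] 0) (𝓝 1) := by
      simpa using (tendsto_const_nhds.sub (((continuous_pow 2).tendsto (0 : ℝ)).div_const
        (κ ^ 2))).mono_left nhdsWithin_le_nhds
    exact (hp.continuousAt_comp hg.continuousAt).eq_of_tendsto <|
      tendsto_of_tendsto_of_tendsto_of_le_of_le' hlow tendsto_const_nhds
        (hgQ.mono fun _ hs => hs.1) (hgQ.mono fun _ hs => hs.2)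
  refine ⟨fun i => ?_, fun i => ?_, fun i => ?_, fun i => ?_, ?_⟩
  · exact hclosed (S := {p | 0 ≤ p.1 i}) (isClosed_le continuous_const (by fun_prop))
      (hQ.mono fun _ hs => hs.1 i)
  · exact hclosed (S := {p | 0 ≤ p.2 i}) (isClosed_le continuous_const (by fun_prop))
      (hQ.mono fun _ hs => hs.2.1 i)
  · exact hone (g := fun p => p.1 i * (V *ᵥ p.2) i) (by fun_prop) (h₁.mono fun _ hs => hs i)
  · exact hone (g := fun p => p.2 i * (Vᵀ *ᵥ p.1) i) (by fun_prop) (h₂.mono fun _ hs => hs i)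
  · exact hclosed (S := {p | ∑ i, p.1 i = ∑ i, p.2 i}) (isClosed_eq (by fun_prop) (by fun_prop))
      (hQ.mono fun _ hs => hs.2.2.2.2)

theorem exists_tendsto_limitEqs {n : ℕ} (hn : 0 < n) {V : Matrix (Fin n) (Fin n) ℝ}
    {c₁ c₂ : ℝ} (hc₁ : 0 < c₁) (hlo : ∀ i j, c₁ ≤ V i j) (hhi : ∀ i j, V i j ≤ c₂)
    {Q : ℝ → (Fin n → ℝ) × (Fin n → ℝ)}
    (hQ : ∀ᶠ s in 𝓝[>] 0, MasterEqs V s (Q s).1 (Q s).2 ∧ 0 < ∑ i, (Q s).1 i) :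
    ∃ p, Tendsto Q (𝓝[>] 0) (𝓝 p) ∧ LimitEqs V p.1 p.2 := by
  have hc₂ : 0 < c₂ := hc₁.trans_le ((hlo ⟨0, hn⟩ ⟨0, hn⟩).trans (hhi _ _))
  set m := √(n * c₁ / 2) / c₂
  have hm : 0 < m := by positivity
  have hm' : c₂ ^ 2 * m ^ 2 < n * c₁ := by
    rw [div_pow, Real.sq_sqrt (by positivity), mul_div_cancel₀ _ (by positivity)]
    linarith [mul_pos (Nat.cast_pos.2 hn : (0 : ℝ) < n) hc₁]
  have hQt : ∀ᶠ s in 𝓝[>] 0, MasterEqs Vᵀ s (Q s).2 (Q s).1 ∧ 0 < ∑ i, (Q s).2 i :=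
    hQ.mono fun _ ⟨h, hS⟩ => ⟨h.symm, h.2.2.2.2 ▸ hS⟩
  have h₁ := eventually_masterEqs_bounds hc₁ hlo hhi hm hm' hQ
  have h₂ := eventually_masterEqs_bounds hc₁ (fun i j => hlo j i) (fun i j => hhi j i) hm hm' hQt
  set B : Fin n → ℝ := fun _ => (c₁ * m)⁻¹
  have hK : IsCompact (Set.Icc 0 B ×ˢ Set.Icc 0 B) := isCompact_Icc.prod isCompact_Icc
  have hQK : ∀ᶠ s in 𝓝[>] 0, Q s ∈ Set.Icc 0 B ×ˢ Set.Icc 0 B := by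
    filter_upwards [hQ, h₁, h₂] with s hs hs₁ hs₂
    exact ⟨⟨hs.1.1, fun i => (hs₁ i).1⟩, ⟨hs.1.2.1, fun i => (hs₂ i).1⟩⟩
  have hlim {p} (hp : MapClusterPt p (𝓝[>] 0) Q) : LimitEqs V p.1 p.2 :=
    .of_mapClusterPt (hQ.mono fun _ hs => hs.1) (h₁.mono fun _ hs i => (hs i).2)
      (h₂.mono fun _ hs i => (hs i).2) hp
  obtain ⟨p, -, hp⟩ := hK.exists_mapClusterPt (tendsto_principal.2 hQK)
  refine ⟨p, hK.tendsto_nhds_of_unique_mapClusterPt hQK fun p' _ hp' => ?_, hlim hp⟩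
  obtain ⟨h₁, h₂⟩ := (hlim hp).unique (fun i j => hc₁.trans_le (hlo i j)) (hlim hp')
  exact Prod.ext h₁ h₂

/-- for a strictly positive bounded standard deviation profile, the
solutions of the Master Equations admit limits as `s ↓ 0`, and these limits satisfy
`q_i(0)·(V q̃(0))_i = 1` and `q̃_i(0)·(Vᵀ q(0))_i = 1`. -/
theorem stmt_13 (n : ℕ) (hn : 1 ≤ n) (σmin σmax : ℝ) (hσmin : 0 < σmin)
    (A : Matrix (Fin n) (Fin n) ℝ)
    (hA : ∀ i j, σmin ≤ A i j ∧ A i j ≤ σmax)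
    (V : Matrix (Fin n) (Fin n) ℝ) (hV : ∀ i j, V i j = A i j ^ 2 / n)
    (Q : ℝ → (Fin n → ℝ) × (Fin n → ℝ))
    (hQ : ∀ s : ℝ, 0 < s → s < Real.sqrt (specRad V) →
      MasterEqs V s (Q s).1 (Q s).2 ∧ ¬((Q s).1 = 0 ∧ (Q s).2 = 0)) :
    ∃ q0 qt0 : Fin n → ℝ,
      Tendsto (fun s => (Q s).1) (nhdsWithin 0 (Set.Ioi (0 : ℝ))) (nhds q0) ∧
      Tendsto (fun s => (Q s).2) (nhdsWithin 0 (Set.Ioi (0 : ℝ))) (nhds qt0) ∧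
      (∀ i, q0 i * V.mulVec qt0 i = 1) ∧
      (∀ i, qt0 i * Vᵀ.mulVec q0 i = 1) := by
  have hc₁ : 0 < σmin ^ 2 / n := by positivity
  have hlo : ∀ i j, σmin ^ 2 / n ≤ V i j := fun i j => by
    rw [hV]
    gcongr
    exact (hA i j).1
  have hhi : ∀ i j, V i j ≤ σmax ^ 2 / n := fun i j => by
    rw [hV]
    gcongr
    exacts [hσmin.le.trans (hA i j).1, (hA i j).2]
  have hρ : 0 < specRad V := specRad_pos_of_trace_pos <|
    Finset.sum_pos (fun i _ => hc₁.trans_le (hlo i i)) ⟨⟨0, hn⟩, Finset.mem_univ _⟩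
  have hQ' : ∀ᶠ s in 𝓝[>] 0, MasterEqs V s (Q s).1 (Q s).2 ∧ 0 < ∑ i, (Q s).1 i := by
    filter_upwards [Ioo_mem_nhdsGT (Real.sqrt_pos.2 hρ)] with s hs
    obtain ⟨h, hne⟩ := hQ s hs.1 hs.2
    exact ⟨h, h.sum_pos hne⟩
  obtain ⟨p, hp, hlim⟩ := exists_tendsto_limitEqs hn hc₁ hlo hhi hQ'
  exact ⟨p.1, p.2, (continuous_fst.tendsto p).comp hp, (continuous_snd.tendsto p).comp hp,
    hlim.mul_mulVec, hlim.mul_transpose_mulVec⟩
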